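/- For integers n ≥ 2 and 1 ≤ k ≤ n−1, define f(n,k) := (−1)^k + (2/n)·∑_{l=1}^{k} (−1)^(k−l)/sin((2l−1)π/(2n)). Then f(n,k) = f(n,n−k). -/

import Mathlib

open Finset

private lemma negpow_sub' (a b : ℕ) (h : b ≤ a) :
    (-1 : ℝ) ^ (a - b) = (-1) ^ a * (-1) ^ b := by
  have h1 : (a - b) + b = a := by omega
  have h2 : (-1 : ℝ) ^ b * (-1) ^ b = 1 := by
    rw [← pow_add]; exact Even.neg_one_pow ⟨b, rfl⟩
  calc (-1 : ℝ) ^ (a - b) = (-1) ^ (a - b) * ((-1) ^ b * (-1) ^ b) := by rw [h2, mul_one]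
    _ = ((-1) ^ (a - b) * (-1) ^ b) * (-1) ^ b := by ring
    _ = (-1) ^ a * (-1) ^ b := by rw [← pow_add, h1]

private lemma cos_nat_pi' (i : ℕ) : Real.cos (i * Real.pi) = (-1) ^ i := by
  have := Real.cos_nat_mul_pi_sub 0 i
  simpa using this

private lemma tel1' (n : ℕ) (x : ℝ) :
    Real.sin x * ∑ j ∈ range n, Real.cos ((2 * (j : ℝ) + 1 - n) * x)
      = Real.sin (n * x) := by
  have key : ∀ j : ℕ, 2 * Real.sin x * Real.cos ((2 * (j : ℝ) + 1 - n) * x)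
      = Real.sin ((2 * ((j : ℝ) + 1) - n) * x) - Real.sin ((2 * (j : ℝ) - n) * x) := by
    intro j
    rw [Real.sin_sub_sin]
    have e1 : ((2 * ((j : ℝ) + 1) - n) * x - (2 * (j : ℝ) - n) * x) / 2 = x := by ring
    have e2 : ((2 * ((j : ℝ) + 1) - n) * x + (2 * (j : ℝ) - n) * x) / 2
        = (2 * (j : ℝ) + 1 - n) * x := by ring
    rw [e1, e2]
  have h2 : 2 * (Real.sin x * ∑ j ∈ range n, Real.cos ((2 * (j : ℝ) + 1 - n) * x))
      = (fun j : ℕ => Real.sin ((2 * (j : ℝ) - n) * x)) n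
        - (fun j : ℕ => Real.sin ((2 * (j : ℝ) - n) * x)) 0 := by
    rw [← Finset.sum_range_sub (fun j : ℕ => Real.sin ((2 * (j : ℝ) - n) * x)) n,
      Finset.mul_sum, Finset.mul_sum]
    refine Finset.sum_congr rfl fun j _ => ?_
    have := key j
    push_cast
    push_cast at this
    linarith [this]
  simp only at h2
  have e3 : (2 * (n : ℝ) - n) * x = n * x := by ring
  have e4 : (2 * ((0 : ℕ) : ℝ) - n) * x = -(n * x) := by push_cast; ring
  rw [e3, e4, Real.sin_neg] at h2
  linarith [h2]

private lemma tel2' (n : ℕ) (α : ℝ) :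
    2 * Real.sin α * ∑ l ∈ range n, Real.cos ((2 * (l : ℝ) + 1) * α)
      = Real.sin (2 * n * α) := by
  have key : ∀ j : ℕ, 2 * Real.sin α * Real.cos ((2 * (j : ℝ) + 1) * α)
      = Real.sin (2 * ((j : ℝ) + 1) * α) - Real.sin (2 * (j : ℝ) * α) := by
    intro j
    rw [Real.sin_sub_sin]
    have e1 : (2 * ((j : ℝ) + 1) * α - 2 * (j : ℝ) * α) / 2 = α := by ring
    have e2 : (2 * ((j : ℝ) + 1) * α + 2 * (j : ℝ) * α) / 2 = (2 * (j : ℝ) + 1) * α := by ring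
    rw [e1, e2]
  have h2 : 2 * Real.sin α * ∑ l ∈ range n, Real.cos ((2 * (l : ℝ) + 1) * α)
      = (fun j : ℕ => Real.sin (2 * (j : ℝ) * α)) n
        - (fun j : ℕ => Real.sin (2 * (j : ℝ) * α)) 0 := by
    rw [← Finset.sum_range_sub (fun j : ℕ => Real.sin (2 * (j : ℝ) * α)) n,
      Finset.mul_sum]
    refine Finset.sum_congr rfl fun j _ => ?_
    have := key j
    push_cast
    push_cast at this
    linarith [this]
  simp only at h2
  simpa using h2

private lemma lemA' (n : ℕ) (hn : 1 ≤ n) (hodd : Odd n) :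
    ∑ i ∈ range n, (-1 : ℝ) ^ i / Real.sin ((2 * (i : ℝ) + 1) * Real.pi / (2 * n))
      = n := by
  have hnR : (0 : ℝ) < n := by exact_mod_cast hn
  have hpi := Real.pi_pos
  have hx : ∀ i : ℕ, i < n →
      Real.sin ((2 * (i : ℝ) + 1) * Real.pi / (2 * n)) ≠ 0 := by
    intro i hi
    have hiR : (i : ℝ) < n := by exact_mod_cast hi
    apply ne_of_gt
    apply Real.sin_pos_of_pos_of_lt_pi
    · positivity
    · rw [div_lt_iff₀ (by positivity)]
      have hlt : (2 * (i : ℝ) + 1) < 2 * n := by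
        exact_mod_cast (by omega : 2 * i + 1 < 2 * n)
      nlinarith [mul_lt_mul_of_pos_right hlt hpi]
  have hterm : ∀ i ∈ range n, (-1 : ℝ) ^ i / Real.sin ((2 * (i : ℝ) + 1) * Real.pi / (2 * n))
      = ∑ j ∈ range n,
          Real.cos ((2 * (j : ℝ) + 1 - n) * ((2 * (i : ℝ) + 1) * Real.pi / (2 * n))) := by
    intro i hi
    have hi' : i < n := mem_range.mp hi
    have hs := hx i hi'
    have ht := tel1' n ((2 * (i : ℝ) + 1) * Real.pi / (2 * n))
    have harg : (n : ℝ) * ((2 * (i : ℝ) + 1) * Real.pi / (2 * n))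
        = i * Real.pi + Real.pi / 2 := by
      field_simp
    rw [harg] at ht
    have hval : Real.sin ((i : ℝ) * Real.pi + Real.pi / 2) = (-1) ^ i := by
      rw [Real.sin_add, Real.sin_pi_div_two, Real.cos_pi_div_two, cos_nat_pi',
        Real.sin_nat_mul_pi]
      ring
    rw [hval] at ht
    rw [eq_comm, eq_div_iff hs]
    linear_combination ht
  rw [Finset.sum_congr rfl hterm, Finset.sum_comm]
  obtain ⟨t, htn⟩ := hodd
  have hjsum : ∀ j ∈ range n,
      (∑ i ∈ range n,
        Real.cos ((2 * (j : ℝ) + 1 - n) * ((2 * (i : ℝ) + 1) * Real.pi / (2 * n))))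
      = if j = t then (n : ℝ) else 0 := by
    intro j hj
    have hj' : j < n := mem_range.mp hj
    by_cases hc : j = t
    · subst hc
      rw [if_pos rfl]
      have hz : (2 * (j : ℝ) + 1 - n) = 0 := by
        have : (n : ℝ) = 2 * j + 1 := by exact_mod_cast htn
        linarith
      rw [hz]
      simp
    · rw [if_neg hc]
      set α : ℝ := (2 * (j : ℝ) + 1 - n) * Real.pi / (2 * n) with hα
      have hre : ∀ i ∈ range n,
          Real.cos ((2 * (j : ℝ) + 1 - n) * ((2 * (i : ℝ) + 1) * Real.pi / (2 * n)))
          = Real.cos ((2 * (i : ℝ) + 1) * α) := by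
        intro i _
        congr 1
        rw [hα]
        ring
      rw [Finset.sum_congr rfl hre]
      have h2 := tel2' n α
      have h2n : Real.sin (2 * (n : ℝ) * α) = 0 := by
        have : 2 * (n : ℝ) * α = ((2 * (j : ℤ) + 1 - n : ℤ) : ℝ) * Real.pi := by
          rw [hα]
          have hne : (n : ℝ) ≠ 0 := ne_of_gt hnR
          field_simp
          all_goals push_cast
          all_goals ring
        rw [this, Real.sin_int_mul_pi]
      have hαne : Real.sin α ≠ 0 := by
        intro h0
        obtain ⟨m, hm⟩ := Real.sin_eq_zero_iff.mp h0
        rw [hα] at hm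
        have hpi' : Real.pi ≠ 0 := ne_of_gt hpi
        have hEq : (m : ℝ) * (2 * n) = 2 * (j : ℝ) + 1 - n := by
          field_simp at hm
          nlinarith [hm]
        have hEqZ : (m : ℤ) * (2 * n) = 2 * (j : ℤ) + 1 - n := by
          exact_mod_cast hEq
        have hnz : (2 * (j : ℤ) + 1 - n) ≠ 0 := by
          intro h
          apply hc
          omega
        have hlt : (2 * (j : ℤ) + 1 - n) < 2 * n := by
          have : (j : ℤ) < n := by exact_mod_cast hj'
          omega
        have hgt : -(2 * (n : ℤ)) < 2 * (j : ℤ) + 1 - n := by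
          have : (0 : ℤ) ≤ (j : ℤ) := Int.ofNat_nonneg j
          omega
        rcases lt_trichotomy m 0 with h | h | h
        · nlinarith [hEqZ]
        · subst h; simp at hEqZ; omega
        · nlinarith [hEqZ]
      rw [h2n] at h2
      have h2' : Real.sin α * (∑ l ∈ range n, Real.cos ((2 * (l : ℝ) + 1) * α)) = 0 := by
        linarith [h2]
      rcases mul_eq_zero.mp h2' with h | h
      · exact absurd h hαne
      · exact h
  rw [Finset.sum_congr rfl hjsum, Finset.sum_ite_eq' (range n) t (fun _ => (n : ℝ))]
  rw [if_pos (mem_range.mpr (by omega))]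

theorem stmt_18 (n k : ℕ) (hn : 2 ≤ n) (hk1 : 1 ≤ k) (hk2 : k ≤ n - 1) :
    ((-1 : ℝ) ^ k + (2 / n) *
        ∑ l ∈ Finset.Icc 1 k,
          (-1 : ℝ) ^ (k - l) / Real.sin (((2 * l - 1 : ℕ) : ℝ) * Real.pi / (2 * n))) =
      ((-1 : ℝ) ^ (n - k) + (2 / n) *
        ∑ l ∈ Finset.Icc 1 (n - k),
          (-1 : ℝ) ^ (n - k - l) / Real.sin (((2 * l - 1 : ℕ) : ℝ) * Real.pi / (2 * n))) := by
  have hn0 : (n : ℝ) ≠ 0 := by positivity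
  have hconv : ∀ m : ℕ, 1 ≤ m →
      (∑ l ∈ Finset.Icc 1 m,
        (-1 : ℝ) ^ (m - l) / Real.sin (((2 * l - 1 : ℕ) : ℝ) * Real.pi / (2 * n)))
      = (-1) ^ (m - 1) *
        ∑ i ∈ range m, (-1 : ℝ) ^ i / Real.sin ((2 * (i : ℝ) + 1) * Real.pi / (2 * n)) := by
    intro m hm
    rw [← Finset.Ico_add_one_right_eq_Icc, Finset.sum_Ico_eq_sum_range, Finset.mul_sum]
    have hr : m + 1 - 1 = m := by omega
    rw [hr]
    refine Finset.sum_congr rfl fun i hi => ?_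
    have hi' : i < m := mem_range.mp hi
    have hcast : ((2 * (1 + i) - 1 : ℕ) : ℝ) = 2 * (i : ℝ) + 1 := by
      have : 2 * (1 + i) - 1 = 2 * i + 1 := by omega
      rw [this]; push_cast; ring
    have hsign : (-1 : ℝ) ^ (m - (1 + i)) = (-1) ^ (m - 1) * (-1) ^ i := by
      rw [negpow_sub' m (1 + i) (by omega), negpow_sub' m 1 (by omega), pow_add]
      ring
    rw [hcast, hsign]
    ring
  have hsplit : ∀ m : ℕ, m ≤ n →
      (∑ i ∈ range n, (-1 : ℝ) ^ i / Real.sin ((2 * (i : ℝ) + 1) * Real.pi / (2 * n)))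
      = (∑ i ∈ range m, (-1 : ℝ) ^ i / Real.sin ((2 * (i : ℝ) + 1) * Real.pi / (2 * n)))
        + (-1 : ℝ) ^ (n - 1) *
          ∑ i ∈ range (n - m), (-1 : ℝ) ^ i / Real.sin ((2 * (i : ℝ) + 1) * Real.pi / (2 * n)) := by
    intro m hm
    set g : ℕ → ℝ := fun i => (-1 : ℝ) ^ i / Real.sin ((2 * (i : ℝ) + 1) * Real.pi / (2 * n))
      with hg
    have h1 : (∑ i ∈ range n, g i) = (∑ i ∈ range m, g i) + ∑ i ∈ range (n - m), g (m + i) := by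
      have hmn : m + (n - m) = n := by omega
      rw [← hmn, Finset.sum_range_add, Nat.add_sub_cancel_left]
    have h2 : (∑ i ∈ range (n - m), g (m + i)) = ∑ i ∈ range (n - m), g (n - 1 - i) := by
      rw [← Finset.sum_range_reflect (fun i => g (m + i)) (n - m)]
      refine Finset.sum_congr rfl fun i hi => ?_
      have hi' : i < n - m := mem_range.mp hi
      congr 1
      omega
    have h3 : ∀ i ∈ range (n - m), g (n - 1 - i) = (-1 : ℝ) ^ (n - 1) * g i := by
      intro i hi
      have hi' : i < n - m := mem_range.mp hi
      have hile : i ≤ n - 1 := by omega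
      have hcast : ((n - 1 - i : ℕ) : ℝ) = (n : ℝ) - 1 - i := by
        have h1n : 1 + i ≤ n := by omega
        push_cast [Nat.cast_sub (by omega : i ≤ n - 1), Nat.cast_sub (by omega : 1 ≤ n)]
        ring
      have hsin : Real.sin ((2 * ((n - 1 - i : ℕ) : ℝ) + 1) * Real.pi / (2 * n))
          = Real.sin ((2 * (i : ℝ) + 1) * Real.pi / (2 * n)) := by
        rw [hcast]
        have : (2 * ((n : ℝ) - 1 - i) + 1) * Real.pi / (2 * n)
            = Real.pi - (2 * (i : ℝ) + 1) * Real.pi / (2 * n) := by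
          field_simp
          ring
        rw [this, Real.sin_pi_sub]
      have hsign : (-1 : ℝ) ^ (n - 1 - i) = (-1) ^ (n - 1) * (-1) ^ i := by
        rw [negpow_sub' (n - 1) i hile]
      rw [hg]
      simp only
      rw [hsin, hsign]
      ring
    rw [h1, h2, Finset.sum_congr rfl h3, ← Finset.mul_sum]
  have hnk1 : 1 ≤ n - k := by omega
  have hkn : k ≤ n := by omega
  rw [hconv k hk1, hconv (n - k) hnk1]
  have hU := hsplit k hkn
  have hU' := hsplit (n - k) (by omega)
  have hnn : n - (n - k) = k := by omega
  rw [hnn] at hU'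
  set Uk := ∑ i ∈ range k, (-1 : ℝ) ^ i / Real.sin ((2 * (i : ℝ) + 1) * Real.pi / (2 * n))
  set Unk := ∑ i ∈ range (n - k), (-1 : ℝ) ^ i / Real.sin ((2 * (i : ℝ) + 1) * Real.pi / (2 * n))
  set Un := ∑ i ∈ range n, (-1 : ℝ) ^ i / Real.sin ((2 * (i : ℝ) + 1) * Real.pi / (2 * n))
  have hsk1 : (-1 : ℝ) ^ (k - 1) = (-1) ^ k * (-1) := by
    rw [negpow_sub' k 1 hk1]; ring
  have hsnk : (-1 : ℝ) ^ (n - k) = (-1) ^ n * (-1) ^ k := negpow_sub' n k hkn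
  have hsnk1 : (-1 : ℝ) ^ (n - k - 1) = (-1) ^ n * (-1) ^ k * (-1) := by
    rw [negpow_sub' (n - k) 1 hnk1, hsnk]; ring
  have hk2 : (-1 : ℝ) ^ k * (-1) ^ k = 1 := by
    rw [← pow_add]; exact Even.neg_one_pow ⟨k, rfl⟩
  rcases Nat.even_or_odd n with he | ho
  · obtain ⟨t, htn⟩ := he
    have hodd1 : Odd (n - 1) := ⟨t - 1, by omega⟩
    have hsn1 : (-1 : ℝ) ^ (n - 1) = -1 := Odd.neg_one_pow hodd1
    have hsn : (-1 : ℝ) ^ n = 1 := Even.neg_one_pow ⟨t, htn⟩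
    rw [hsn1] at hU hU'
    have hUkk : Uk = Unk := by linarith
    rw [hsk1, hsnk, hsnk1, hsn, hUkk]
    ring
  · obtain ⟨t, htn⟩ := ho
    have hsn1 : (-1 : ℝ) ^ (n - 1) = 1 := Even.neg_one_pow ⟨t, by omega⟩
    have hsn : (-1 : ℝ) ^ n = -1 := Odd.neg_one_pow ⟨t, htn⟩
    rw [hsn1, one_mul] at hU
    have hUnval : Un = n := lemA' n (by omega) ⟨t, htn⟩
    have hsum : Uk + Unk = (n : ℝ) := by rw [← hUnval, hU]
    rw [hsk1, hsnk, hsnk1, hsn]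
    have expand : (2 / (n : ℝ)) * ((-1) ^ k * (-1) * Uk)
        - ((2 / n) * (-1 * (-1) ^ k * (-1) * Unk))
        = -(2 / n) * (-1) ^ k * (Uk + Unk) := by ring
    rw [hsum] at expand
    have : (2 / (n : ℝ)) * (-1 : ℝ) ^ k * n = 2 * (-1) ^ k := by
      field_simp
    nlinarith [this, expand]
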